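/- Let V be a Hilbert space, M ⊂ V a bounded subset, V_n and W_m finite-dimensional subspaces with β(V_n, W_m) > 0, and A the PBDW reconstruction map. If ε_n = sup_{u∈M} dist(u, V_n), then the worst-case reconstruction error satisfies sup_{u∈M} ‖u − A(P_{W_m} u)‖ ≤ β(V_n, W_m)^{-1} ε_n. -/

import Mathlib

/-!
Write `Q = P_{Vₙ^⊥}`, so that `‖Q x‖ = dist(x, Vₙ)`, and `η = u - A(P_{Wₘ} u) ∈ Wₘ^⊥`.
Since `A ω` minimizes `‖Q ·‖` on the affine set `ω + Wₘ^⊥`, which contains every `A ω + t η`,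
first-order optimality gives `Q (A ω) ⊥ Q η`, hence `‖Q η‖ ≤ ‖Q (A ω) + Q η‖ = ‖Q u‖ ≤ ε`.
On the other hand, for `η ∈ Wₘ^⊥` and `v = P_{Vₙ} η` we have
`‖v‖² = ⟪η, v - P_{Wₘ} v⟫ ≤ ‖η‖ √(1 - β²) ‖v‖`, so `‖v‖² ≤ (1 - β²) ‖η‖²`,
and Pythagoras turns this into `β ‖η‖ ≤ ‖Q η‖`.
-/

open Submodule RealInnerProductSpace

section

variable {E F : Type*} [NormedAddCommGroup E] [InnerProductSpace ℝ E]
  [NormedAddCommGroup F] [InnerProductSpace ℝ F]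

theorem inner_eq_zero_of_forall_norm_le_norm_add_smul {x y : F}
    (h : ∀ t : ℝ, ‖x‖ ≤ ‖x + t • y‖) : ⟪x, y⟫ = 0 := by
  set c := ⟪x, y⟫
  set b := ‖y‖ ^ 2
  -- test at `t = -c / (b + 1)`, which avoids a case split on `y = 0`
  have hb : 0 ≤ b := by positivity
  have hsq := pow_le_pow_left₀ (norm_nonneg x) (h (-c / (b + 1))) 2
  rw [norm_add_sq_real, real_inner_smul_right, norm_smul, mul_pow, Real.norm_eq_abs,
    sq_abs] at hsq
  have key : c ^ 2 * (b + 2) ≤ 0 := by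
    field_simp at hsq
    nlinarith
  nlinarith [sq_nonneg c]

theorem norm_le_norm_add_of_forall_norm_le_norm_add_smul {x y : F}
    (h : ∀ t : ℝ, ‖x‖ ≤ ‖x + t • y‖) : ‖y‖ ≤ ‖x + y‖ := by
  have hxy := norm_add_sq_eq_norm_sq_add_norm_sq_real
    (inner_eq_zero_of_forall_norm_le_norm_add_smul h)
  nlinarith [norm_nonneg y, norm_nonneg (x + y), mul_self_nonneg ‖x‖]

theorem norm_map_sub_le_of_forall_norm_map_le (Q : E →ₗ[ℝ] F) {L : Submodule ℝ E} {x u : E}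
    (hu : u - x ∈ L) (hx : ∀ y, y - x ∈ L → ‖Q x‖ ≤ ‖Q y‖) : ‖Q (u - x)‖ ≤ ‖Q u‖ := by
  have hline : ∀ t : ℝ, ‖Q x‖ ≤ ‖Q x + t • Q (u - x)‖ := fun t => by
    simpa [map_add, map_smul] using hx (x + t • (u - x)) (by simpa using L.smul_mem t hu)
  simpa using norm_le_norm_add_of_forall_norm_le_norm_add_smul hline

theorem mul_norm_le_norm_starProjection_orthogonal {K L : Submodule ℝ E}
    [K.HasOrthogonalProjection] [L.HasOrthogonalProjection] {β : ℝ} (hβ₀ : 0 ≤ β) (hβ₁ : β ≤ 1)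
    (hKL : ∀ v ∈ K, β * ‖v‖ ≤ ‖L.starProjection v‖) {η : E} (hη : η ∈ Lᗮ) :
    β * ‖η‖ ≤ ‖Kᗮ.starProjection η‖ := by
  set v := K.starProjection η
  set w := L.starProjection v
  have hv : ‖v‖ ^ 2 = ⟪η, v - w⟫ := by
    have h₁ : ⟪η - v, v⟫ = 0 := starProjection_inner_eq_zero η v (K.starProjection_apply_mem η)
    have h₂ : ⟪w, η⟫ = 0 := hη w (L.starProjection_apply_mem v)
    rw [inner_sub_left, real_inner_self_eq_norm_sq] at h₁
    rw [inner_sub_right, real_inner_comm w]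
    linarith
  have hvw : ‖v - w‖ ^ 2 = ‖v‖ ^ 2 - ‖w‖ ^ 2 := by
    rw [norm_sq_eq_add_norm_sq_starProjection v L, starProjection_orthogonal_val]
    ring
  have hη2 : ‖η‖ ^ 2 = ‖v‖ ^ 2 + ‖Kᗮ.starProjection η‖ ^ 2 :=
    norm_sq_eq_add_norm_sq_starProjection η K
  have hcs : ⟪η, v - w⟫ ≤ ‖η‖ * ‖v - w‖ := real_inner_le_norm _ _
  have hβv : β * ‖v‖ ≤ ‖w‖ := hKL v (K.starProjection_apply_mem η)
  have hr : ‖v - w‖ ^ 2 ≤ (1 - β ^ 2) * ‖v‖ ^ 2 := by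
    nlinarith [mul_nonneg hβ₀ (norm_nonneg v)]
  have hv' : ‖v‖ ^ 2 ≤ (1 - β ^ 2) * ‖η‖ ^ 2 := by
    rcases (norm_nonneg v).eq_or_lt with h0 | hpos
    · rw [← h0, sq (0 : ℝ), mul_zero]
      have : 0 ≤ 1 - β ^ 2 := by nlinarith
      positivity
    · refine le_of_mul_le_mul_left ?_ (pow_pos hpos 2)
      calc ‖v‖ ^ 2 * ‖v‖ ^ 2 ≤ (‖η‖ * ‖v - w‖) ^ 2 := by
            rw [← sq, hv]
            exact pow_le_pow_left₀ (hv ▸ sq_nonneg _) hcs 2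
        _ = ‖η‖ ^ 2 * ‖v - w‖ ^ 2 := by ring
        _ ≤ ‖η‖ ^ 2 * ((1 - β ^ 2) * ‖v‖ ^ 2) := by gcongr
        _ = ‖v‖ ^ 2 * ((1 - β ^ 2) * ‖η‖ ^ 2) := by ring
  refine (pow_le_pow_iff_left₀ (by positivity) (norm_nonneg _) two_ne_zero).1 ?_
  nlinarith

/-- The inf-sup constant `β(K, L)`; it is `0` when `K = ⊥` (empty infimum). -/
noncomputable def infSupConstant (K L : Submodule ℝ E) [L.HasOrthogonalProjection] : ℝ :=
  ⨅ v : {v : K // (v : E) ≠ 0}, ‖L.starProjection v‖ / ‖(v : E)‖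

theorem infSupConstant_mul_norm_le {K L : Submodule ℝ E} [L.HasOrthogonalProjection] {v : E}
    (hv : v ∈ K) : infSupConstant K L * ‖v‖ ≤ ‖L.starProjection v‖ := by
  rcases eq_or_ne v 0 with rfl | hv0
  · simp
  have hbdd : BddBelow (Set.range fun v : {v : K // (v : E) ≠ 0} =>
      ‖L.starProjection v‖ / ‖(v : E)‖) :=
    ⟨0, by rintro _ ⟨v, rfl⟩; positivity⟩
  rw [← le_div_iff₀ (norm_pos_iff.2 hv0)]
  exact ciInf_le hbdd ⟨⟨v, hv⟩, hv0⟩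

theorem infSupConstant_le_one (K L : Submodule ℝ E) [L.HasOrthogonalProjection] :
    infSupConstant K L ≤ 1 := by
  rcases isEmpty_or_nonempty {v : K // (v : E) ≠ 0} with h | ⟨⟨v, hv⟩⟩
  · simp [infSupConstant, Real.iInf_of_isEmpty]
  · refine le_of_mul_le_mul_right ?_ (norm_pos_iff.2 hv)
    rw [one_mul]
    exact (infSupConstant_mul_norm_le v.2).trans (L.norm_starProjection_apply_le _)

end

theorem pbdw_worst_case_error_general
    {V : Type*} [NormedAddCommGroup V] [InnerProductSpace ℝ V]
    (M : Set V)
    (Vn Wm : Submodule ℝ V) [FiniteDimensional ℝ Vn] [FiniteDimensional ℝ Wm]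
    (hβ : 0 < ⨅ v : {v : Vn // (v : V) ≠ 0},
        ‖(Submodule.orthogonalProjection Wm (v : V) : V)‖ / ‖(v : V)‖)
    (A : Wm → V)
    -- `A ω` lies in the affine set `ω + Wₘ^⊥` and minimizes the distance to `Vₙ` there
    (hAmem : ∀ ω : Wm, A ω - (ω : V) ∈ Wmᗮ)
    (hAmin : ∀ ω : Wm, ∀ u' : V, u' - (ω : V) ∈ Wmᗮ →
      ‖A ω - (Submodule.orthogonalProjection Vn (A ω) : V)‖
        ≤ ‖u' - (Submodule.orthogonalProjection Vn u' : V)‖)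
    (ε : ℝ) (hε : ∀ u ∈ M, ‖u - (Submodule.orthogonalProjection Vn u : V)‖ ≤ ε) :
    ∀ u ∈ M, ‖u - A (Submodule.orthogonalProjection Wm u)‖
      ≤ (⨅ v : {v : Vn // (v : V) ≠ 0},
          ‖(Submodule.orthogonalProjection Wm (v : V) : V)‖ / ‖(v : V)‖)⁻¹ * ε := by
  change 0 < infSupConstant Vn Wm at hβ
  change ∀ u ∈ M, _ ≤ (infSupConstant Vn Wm)⁻¹ * ε
  simp only [coe_orthogonalProjectionOnto_apply, ← starProjection_orthogonal_val] at hAmin hε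
  intro u hu
  set ω := Wm.orthogonalProjectionOnto u
  have hη : u - A ω ∈ Wmᗮ := by
    simpa [ω] using Wmᗮ.sub_mem (Wm.sub_starProjection_mem_orthogonal u) (hAmem ω)
  have hres : ‖Vnᗮ.starProjection (u - A ω)‖ ≤ ‖Vnᗮ.starProjection u‖ :=
    norm_map_sub_le_of_forall_norm_map_le (Vnᗮ.starProjection : V →ₗ[ℝ] V) hη
      fun y hy => hAmin ω y (by simpa using Wmᗮ.add_mem hy (hAmem ω))
  have hβη := mul_norm_le_norm_starProjection_orthogonal hβ.le (infSupConstant_le_one Vn Wm)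
    (fun _ => infSupConstant_mul_norm_le) hη
  rw [inv_mul_eq_div, le_div_iff₀ hβ, mul_comm]
  exact hβη.trans (hres.trans (hε u hu))

/-- Worst-case PBDW reconstruction error over a bounded manifold `M`:
if `dist(u, Vₙ) ≤ ε` on `M`, then `‖u − A(P_{Wₘ} u)‖ ≤ β⁻¹ ε` on `M`. -/
theorem pbdw_worst_case_error
    {V : Type*} [NormedAddCommGroup V] [InnerProductSpace ℝ V] [CompleteSpace V]
    (M : Set V) (hM : Bornology.IsBounded M)
    (Vn Wm : Submodule ℝ V) [FiniteDimensional ℝ Vn] [FiniteDimensional ℝ Wm]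
    (hβ : 0 < ⨅ v : {v : Vn // (v : V) ≠ 0},
        ‖(Submodule.orthogonalProjection Wm (v : V) : V)‖ / ‖(v : V)‖)
    (A : Wm → V)
    -- `A ω` lies in the affine set `ω + Wₘ^⊥` and minimizes the distance to `Vₙ` there
    (hAmem : ∀ ω : Wm, A ω - (ω : V) ∈ Wmᗮ)
    (hAmin : ∀ ω : Wm, ∀ u' : V, u' - (ω : V) ∈ Wmᗮ →
      ‖A ω - (Submodule.orthogonalProjection Vn (A ω) : V)‖
        ≤ ‖u' - (Submodule.orthogonalProjection Vn u' : V)‖)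
    (ε : ℝ) (hε : ∀ u ∈ M, ‖u - (Submodule.orthogonalProjection Vn u : V)‖ ≤ ε) :
    ∀ u ∈ M, ‖u - A (Submodule.orthogonalProjection Wm u)‖
      ≤ (⨅ v : {v : Vn // (v : V) ≠ 0},
          ‖(Submodule.orthogonalProjection Wm (v : V) : V)‖ / ‖(v : V)‖)⁻¹ * ε :=
  pbdw_worst_case_error_general M Vn Wm hβ A hAmem hAmin ε hε
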